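/- arXiv:1101.3772 — 3 statements merged into one kernel-verified Lean document; each statement's English description precedes it below -/
import Mathlib

section
/- Let G be a group acting on a set M, let H be a group, let D : G → H be a group homomorphism with finite kernel, and let c be a central element of H. Assume that every σ ∈ G with D(σ) = c has only finitely many fixed points in M. Then every point x ∈ M that is fixed by some φ ∈ G with D(φ) = c has a finite orbit under G; that is, the set {ψ · x : ψ ∈ G} is finite. -/
/-!
Conjugating by `ψ` carries the fixed points of `φ` to those of `ψ φ ψ⁻¹`, so the orbit of a fixed
point `x` of `φ` lies in the union of the fixed-point sets of the conjugates of `φ`. Since `D φ` is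
central, all these conjugates lie in the fiber of `D` over `D φ`, a coset of the finite kernel.
-/

open MulAction

theorem MonoidHom.finite_preimage_singleton_apply {G H : Type*} [Group G] [Group H] {f : G →* H}
    (hf : (f.ker : Set G).Finite) (a : G) : (f ⁻¹' {f a}).Finite :=
  have := hf.to_subtype
  have := Finite.of_equiv _ (f.fiberEquivKer a).symm
  Set.toFinite _

theorem MonoidHom.map_conj_of_commute {G H : Type*} [Group G] [Group H] (f : G →* H) {g ψ : G}
    (h : Commute (f ψ) (f g)) : f (ψ * g * ψ⁻¹) = f g := by
  rw [map_mul, map_mul, h.eq, map_inv, mul_inv_cancel_right]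

theorem MulAction.finite_orbit_of_mem_fixedBy {G M : Type*} [Group G] [MulAction G M] {S : Set G}
    (hS : S.Finite) (hfix : ∀ σ ∈ S, (fixedBy M σ).Finite) {φ : G}
    (hconj : ∀ ψ : G, ψ * φ * ψ⁻¹ ∈ S) {x : M} (hx : x ∈ fixedBy M φ) :
    (orbit G x).Finite := by
  refine (hS.biUnion hfix).subset ?_
  rintro _ ⟨ψ, rfl⟩
  have hψx : ψ • x ∈ fixedBy M (ψ * φ * ψ⁻¹) :=
    smul_fixedBy (α := M) φ ψ ▸ Set.smul_mem_smul_set hx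
  exact Set.mem_biUnion (hconj ψ) hψx

/-- If `D : G → H` has finite kernel, `c` is central in `H`, and every `σ`
with `D σ = c` has finitely many fixed points in `M`, then every point
fixed by some `φ` with `D φ = c` has a finite `G`-orbit. -/
theorem stmt_1 {G H M : Type*} [Group G] [Group H] [MulAction G M]
    (D : G →* H) (hker : (D.ker : Set G).Finite)
    (c : H) (hc : ∀ h : H, c * h = h * c)
    (hfix : ∀ σ : G, D σ = c → {x : M | σ • x = x}.Finite)
    (x : M) (φ : G) (hφ : D φ = c) (hx : φ • x = x) :
    {y : M | ∃ ψ : G, ψ • x = y}.Finite := by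
  subst hφ
  have hconj (ψ : G) : ψ * φ * ψ⁻¹ ∈ D ⁻¹' {D φ} :=
    D.map_conj_of_commute (hc (D ψ)).symm
  exact finite_orbit_of_mem_fixedBy (D.finite_preimage_singleton_apply hker φ)
    hfix hconj hx
end

section
/- Define the real numbers z = sin(π/5)/sin(π/3), y = sin(7π/15)/sin(π/3), x = z − z·sin(π/30)/sin(3π/10), h = x·sin(3π/10), and h₁ = (y + 1)·sin(π/30) + z·sin(π/30). Then h₁/h = (√5 − 1)/2; in particular this ratio is irrational. -/
/-!
Write θ = π/30. Sum-to-product gives h = 2 sin 6θ sin 4θ, and the triple-angle formula gives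
y + 1 + z = 1 + 2 cos 4θ = sin 6θ / sin 2θ, so
h₁/h = 1/(4 cos θ sin 4θ) = 1/(2 sin 5θ + 2 sin 3θ) = 1/(1 + 2 sin(π/10)).
Since sin(π/10) = cos(2π/5) = (√5 − 1)/4, the denominator is the golden ratio φ,
and 1/φ = (√5 − 1)/2.
-/

open Real

theorem sin_three_mul_eq_sin_mul (θ : ℝ) : sin (3 * θ) = sin θ * (1 + 2 * cos (2 * θ)) := by
  rw [sin_three_mul, cos_two_mul, cos_sq']; ring

theorem sin_pi_div_fifteen_mul_one_add_two_mul_cos :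
    sin (π / 15) * (1 + 2 * cos (2 * π / 15)) = sin (π / 5) := by
  rw [show 2 * π / 15 = 2 * (π / 15) by ring, ← sin_three_mul_eq_sin_mul]; ring_nf

theorem one_add_two_mul_sin_pi_div_ten : 1 + 2 * sin (π / 10) = goldenRatio := by
  have h : sin (π / 10) = 2 * cos (π / 5) ^ 2 - 1 := by
    rw [← cos_two_mul, ← cos_pi_div_two_sub]; ring_nf
  rw [h, cos_pi_div_five]
  linear_combination (1 / 4 : ℝ) * sq_sqrt (show (0 : ℝ) ≤ 5 by norm_num)

theorem sin_three_pi_div_ten_sub_sin_pi_div_thirty :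
    sin (3 * π / 10) - sin (π / 30) = 2 * sin (2 * π / 15) * sin (π / 3) := by
  rw [sin_sub_sin, sin_pi_div_three, ← cos_pi_div_six]; ring_nf

theorem sin_seven_pi_div_fifteen_add_sin_pi_div_five :
    sin (7 * π / 15) + sin (π / 5) = 2 * sin (π / 3) * cos (2 * π / 15) := by
  rw [sin_add_sin]; ring_nf

theorem sin_pi_div_thirty_mul_goldenRatio :
    sin (π / 30) * goldenRatio = 2 * sin (π / 15) * sin (2 * π / 15) := by
  have h_double : sin (π / 15) = 2 * sin (π / 30) * cos (π / 30) := by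
    rw [← sin_two_mul]; ring_nf
  have h_prod : 2 * sin (2 * π / 15) * cos (π / 30) = sin (π / 10) + 1 / 2 := by
    rw [two_mul_sin_mul_cos, ← sin_pi_div_six]; ring_nf
  rw [← one_add_two_mul_sin_pi_div_ten, h_double]
  linear_combination -2 * sin (π / 30) * h_prod

/-- The ratio `h₁/h` of heights for the triangle `(π/5, π/3, 7π/15)` equals
`(√5 − 1)/2`, which is irrational. -/
theorem stmt_10 (z y x h h₁ : ℝ)
    (hz : z = Real.sin (π / 5) / Real.sin (π / 3))
    (hy : y = Real.sin (7 * π / 15) / Real.sin (π / 3))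
    (hx : x = z - z * Real.sin (π / 30) / Real.sin (3 * π / 10))
    (hh : h = x * Real.sin (3 * π / 10))
    (hh₁ : h₁ = (y + 1) * Real.sin (π / 30) + z * Real.sin (π / 30)) :
    h₁ / h = (Real.sqrt 5 - 1) / 2 ∧ Irrational (h₁ / h) := by
  have hπ := pi_pos
  have hs3 : sin (π / 3) ≠ 0 := (sin_pos_of_pos_of_lt_pi (by positivity) (by linarith)).ne'
  have h_eq : h = 2 * sin (π / 5) * sin (2 * π / 15) := by
    rw [hh, hx, hz, sub_mul,
      div_mul_cancel₀ _ (sin_pos_of_pos_of_lt_pi (by positivity) (by linarith)).ne', ← mul_sub,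
      sin_three_pi_div_ten_sub_sin_pi_div_thirty]
    field_simp
  have h₁_eq : h₁ * sin (π / 15) = sin (π / 30) * sin (π / 5) := by
    have hyz : y + z = 2 * cos (2 * π / 15) := by
      rw [hy, hz, ← add_div, sin_seven_pi_div_fifteen_add_sin_pi_div_five]
      field_simp
    rw [hh₁, ← sin_pi_div_fifteen_mul_one_add_two_mul_cos]
    linear_combination sin (π / 30) * sin (π / 15) * hyz
  have hφ : h₁ * goldenRatio = h := by
    apply mul_right_cancel₀ (sin_pos_of_pos_of_lt_pi (x := π / 15) (by positivity) (by linarith)).ne'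
    rw [h_eq]
    linear_combination goldenRatio * h₁_eq + sin (π / 5) * sin_pi_div_thirty_mul_goldenRatio
  have h_pos : 0 < h := by
    rw [h_eq]
    exact mul_pos (mul_pos two_pos (sin_pos_of_pos_of_lt_pi (by positivity) (by linarith)))
      (sin_pos_of_pos_of_lt_pi (by positivity) (by linarith))
  have ratio : h₁ / h = -goldenConj := by
    rw [← inv_goldenRatio, div_eq_iff h_pos.ne', ← hφ, mul_comm h₁,
      inv_mul_cancel_left₀ goldenRatio_ne_zero]
  exact ⟨ratio.trans (by ring), ratio ▸ goldenConj_irrational.neg⟩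
end

section
/- Define the real numbers h = sin(π/5)/sin(π/3) − (1 + sin(7π/15)/sin(π/3))·sin(π/30)/sin(19π/30) multiplied by sin(11π/30), and h₁ = sin(π/10); that is, h = sin(11π/30)·( sin(π/5)/sin(π/3) − (1 + sin(7π/15)/sin(π/3))·sin(π/30)/sin(19π/30) ). Then the ratio h/h₁ is irrational. -/
open Real

/-! The product-to-sum formula collapses `h` to `1/2 - sin (π/30)`. Writing
`sin (π/30) = √3/2 · sin (π/5) - (1 + √5)/8` and `sin (π/10) = (√5 - 1)/4`, a relation
`h = x h₁` expresses `√3 sin (π/5)` in `ℚ(x, √5)`; squaring it, using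
`sin² (π/5) = (5 - √5)/8`, gives `3x² = (x² + 2x - 2)√5`, which no rational `x` satisfies. -/

lemma irrational_of_three_mul_sq_eq_mul {x y : ℝ} (hy : Irrational y)
    (hxy : 3 * x ^ 2 = (x ^ 2 + 2 * x - 2) * y) : Irrational x := by
  rintro ⟨q, rfl⟩
  have hq : (q : ℝ) ^ 2 + 2 * q - 2 ≠ 0 := by
    intro h0
    have hq0 : (q : ℝ) = 0 := by simpa [h0] using hxy
    simp [hq0] at h0
  apply hy.ne_rat (3 * q ^ 2 / (q ^ 2 + 2 * q - 2))
  push_cast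
  rw [hxy, mul_div_cancel_left₀ _ hq]

lemma Real.sin_mul_sin_eq (x y : ℝ) : sin x * sin y = (cos (x - y) - cos (x + y)) / 2 := by
  rw [cos_sub, cos_add]; ring

lemma Real.sin_pi_div_ten : sin (π / 10) = (√5 - 1) / 4 := by
  rw [show π / 10 = π / 2 - 2 * (π / 5) by ring, sin_pi_div_two_sub, cos_two_mul,
    cos_pi_div_five]
  linear_combination (1 / 8) * Real.sq_sqrt (show (0 : ℝ) ≤ 5 by norm_num)

lemma Real.sin_sq_pi_div_five : sin (π / 5) ^ 2 = (5 - √5) / 8 := by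
  rw [sin_sq, cos_pi_div_five]
  linear_combination (-1 / 16) * Real.sq_sqrt (show (0 : ℝ) ≤ 5 by norm_num)

lemma Real.sin_pi_div_thirty : sin (π / 30) = √3 / 2 * sin (π / 5) - (1 + √5) / 8 := by
  rw [show π / 30 = π / 5 - π / 6 by ring, sin_sub, cos_pi_div_six, sin_pi_div_six,
    cos_pi_div_five]
  ring

lemma sin_mul_sin_sub_sin_mul_sin_eq_sqrt_three_div_four :
    sin (11 * π / 30) * sin (π / 5) - sin (7 * π / 15) * sin (π / 30) = √3 / 4 := by
  rw [sin_mul_sin_eq, sin_mul_sin_eq,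
    show 11 * π / 30 - π / 5 = π / 6 by ring,
    show 11 * π / 30 + π / 5 = π - 13 * π / 30 by ring,
    show 7 * π / 15 - π / 30 = 13 * π / 30 by ring,
    show 7 * π / 15 + π / 30 = π / 2 by ring,
    cos_pi_sub, cos_pi_div_two, cos_pi_div_six]
  ring

lemma cylinder_height_eq :
    sin (11 * π / 30) * (sin (π / 5) / sin (π / 3) -
      (1 + sin (7 * π / 15) / sin (π / 3)) * sin (π / 30) / sin (19 * π / 30)) =
      1 / 2 - sin (π / 30) := by
  have h19 : sin (19 * π / 30) = sin (11 * π / 30) := by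
    rw [show 19 * π / 30 = π - 11 * π / 30 by ring, sin_pi_sub]
  have h11 : sin (11 * π / 30) ≠ 0 :=
    (sin_pos_of_pos_of_lt_pi (by positivity) (by linarith [pi_pos])).ne'
  have h3 : √3 ≠ 0 := by positivity
  rw [h19, sin_pi_div_three]
  have key := sin_mul_sin_sub_sin_mul_sin_eq_sqrt_three_div_four
  field_simp at key ⊢
  linear_combination key

lemma three_mul_sq_eq_of_eq_mul_sin_pi_div_ten {x : ℝ}
    (hx : 1 / 2 - sin (π / 30) = x * sin (π / 10)) :
    3 * x ^ 2 = (x ^ 2 + 2 * x - 2) * √5 := by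
  rw [sin_pi_div_thirty, sin_pi_div_ten] at hx
  have h3 := Real.sq_sqrt (show (0 : ℝ) ≤ 3 by norm_num)
  have h5 := Real.sq_sqrt (show (0 : ℝ) ≤ 5 by norm_num)
  have hs := sin_sq_pi_div_five
  -- square `√3 sin (π/5) = (5 + √5)/4 - x (√5 - 1)/2`
  linear_combination 4 * ((5 + √5) / 4 - x * (√5 - 1) / 2 + √3 * sin (π / 5)) * hx
    + 2 * sin (π / 5) ^ 2 * h3 + 6 * hs
    + (x / 2 - x ^ 2 / 2 - 1 / 8) * h5

/-- The ratio `h/h₁` of heights of two cylinders of the surface unfolded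
from the triangle `(π/5, π/3, 7π/15)` is irrational. -/
theorem stmt_11 (h h₁ : ℝ)
    (hh : h = Real.sin (11 * π / 30) *
      (Real.sin (π / 5) / Real.sin (π / 3) -
        (1 + Real.sin (7 * π / 15) / Real.sin (π / 3)) *
          Real.sin (π / 30) / Real.sin (19 * π / 30)))
    (hh₁ : h₁ = Real.sin (π / 10)) :
    Irrational (h / h₁) := by
  have hh₁_ne : h₁ ≠ 0 :=
    hh₁ ▸ (sin_pos_of_pos_of_lt_pi (by positivity) (by linarith [pi_pos])).ne'
  refine irrational_of_three_mul_sq_eq_mul (by simpa using Nat.prime_five.irrational_sqrt) ?_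
  apply three_mul_sq_eq_of_eq_mul_sin_pi_div_ten
  rw [← cylinder_height_eq, ← hh, ← hh₁, div_mul_cancel₀ h hh₁_ne]
end
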